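/- There is no finite time-abstract language equivalence for event-clock automata: any equivalence relation ≈ on valuations of event clocks over the alphabet {a,b} such that v1 ≈ v2 implies Untime(L(A,(q,v1))) = Untime(L(A,(q,v2))) for every event-clock automaton A and location q has infinitely many equivalence classes. -/

import Mathlib

/-- Event clocks over alphabet `α`: a history clock and a prophecy clock per letter. -/
inductive Clock (α : Type) where
  | hist (a : α)
  | proph (a : α)
deriving DecidableEq

/-- A valuation assigns to each event clock a real value or `⊥` (here `none`). -/
def Val (α : Type) := Clock α → Option ℝ

/-- All defined clock values are nonnegative. -/
def Nonneg {α : Type} (v : Val α) : Prop := ∀ x r, v x = some r → 0 ≤ r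

/-- `v[x := d]`. -/
def Val.set {α : Type} [DecidableEq α] (v : Val α) (x : Clock α) (d : Option ℝ) : Val α :=
  fun y => if y = x then d else v y

/-- Time elapse: history clocks increase, prophecy clocks decrease; `⊥` unaffected. -/
def elapse {α : Type} (v : Val α) (t : ℝ) : Val α := fun c =>
  match c with
  | .hist a => (v (.hist a)).map (· + t)
  | .proph a => (v (.proph a)).map (· - t)

/-- Time elapse by `t` is allowed: `t ≥ 0` and all prophecy clocks are at least `t`. -/
def CanElapse {α : Type} (v : Val α) (t : ℝ) : Prop :=
  0 ≤ t ∧ ∀ a r, v (.proph a) = some r → t ≤ r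

def InitialVal {α : Type} (v : Val α) : Prop := ∀ a, v (.hist a) = none

def FinalVal {α : Type} (v : Val α) : Prop := ∀ a, v (.proph a) = none

/-- Clock constraints: Boolean combinations of atomic constraints `x ∼ c`. -/
inductive Constr (α : Type) where
  | tt
  | lt (x : Clock α) (c : ℕ)
  | gt (x : Clock α) (c : ℕ)
  | eq (x : Clock α) (c : ℕ)
  | not (ψ : Constr α)
  | and (ψ₁ ψ₂ : Constr α)

def Constr.sat {α : Type} (v : Val α) : Constr α → Prop
  | .tt => True
  | .lt x c => ∃ r, v x = some r ∧ r < (c : ℝ)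
  | .gt x c => ∃ r, v x = some r ∧ (c : ℝ) < r
  | .eq x c => v x = some (c : ℝ)
  | .not ψ => ¬ Constr.sat v ψ
  | .and ψ₁ ψ₂ => Constr.sat v ψ₁ ∧ Constr.sat v ψ₂

/-- An event-clock automaton. -/
structure ECTA (α Q : Type) where
  init : Q
  edges : Set (Q × α × Constr α × Q)
  accept : Set Q

/-- Discrete step on letter `σ`: there is a nonnegative valuation `v̄` with
`v̄[→σ := 0] = v`, `v̄[←σ := 0] = v'` and `v̄ ⊨ ψ` for some edge `(q,σ,ψ,q')`. -/
def DStep {α Q : Type} [DecidableEq α] (A : ECTA α Q) (q : Q) (v : Val α) (σ : α)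
    (q' : Q) (v' : Val α) : Prop :=
  ∃ ψ, (q, σ, ψ, q') ∈ A.edges ∧
    ∃ vb : Val α, Nonneg vb ∧
      vb.set (.proph σ) (some 0) = v ∧
      vb.set (.hist σ) (some 0) = v' ∧
      Constr.sat vb ψ

/-- Combined step: elapse `t`, then fire a `σ`-edge. -/
def TStep {α Q : Type} [DecidableEq α] (A : ECTA α Q) (q : Q) (v : Val α) (t : ℝ) (σ : α)
    (q' : Q) (v' : Val α) : Prop :=
  CanElapse v t ∧ DStep A q (elapse v t) σ q' v'

/-- Acceptance of a timed word (given by successive delays) from state `(q,v)`. -/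
inductive ECAcc {α Q : Type} [DecidableEq α] (A : ECTA α Q) : Q → Val α → List (ℝ × α) → Prop where
  | nil : ∀ q v, q ∈ A.accept → FinalVal v → ECAcc A q v []
  | cons : ∀ q v t σ q' v' w, TStep A q v t σ q' v' → ECAcc A q' v' w → ECAcc A q v ((t, σ) :: w)

/-- `Untime(L(A,(q,v)))`. -/
def UntimedLangFrom {α Q : Type} [DecidableEq α] (A : ECTA α Q) (q : Q) (v : Val α) :
    Set (List α) :=
  { w | ∃ θ : List (ℝ × α), ECAcc A q v θ ∧ θ.map Prod.snd = w }

/-- The timed language of `A` (initialized runs). -/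
def TLang {α Q : Type} [DecidableEq α] (A : ECTA α Q) : Set (List (ℝ × α)) :=
  { θ | ∃ v, Nonneg v ∧ InitialVal v ∧ ECAcc A A.init v θ }

/-- `Untime(L(A))`. -/
def UntimedLang {α Q : Type} [DecidableEq α] (A : ECTA α Q) : Set (List α) :=
  { w | ∃ v, Nonneg v ∧ InitialVal v ∧ w ∈ UntimedLangFrom A A.init v }

/-!
Let `v_m` be the valuation in which the last `a` happened `m` time units ago and the next `a`
happens now (`←a = m`, `→a = 0`, all other clocks `⊥`). Since `→a = 0` forbids any delay
before that `a`, the one-edge automaton guarded by `←a = n` accepts the untimed word `a` from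
`v_m` exactly when `m = n`. So the valuations `v_m`, `m ∈ ℕ`, are pairwise inequivalent.
-/

section

variable {α : Type} [DecidableEq α]

@[simp]
theorem Val.set_apply_same (v : Val α) (x : Clock α) (d : Option ℝ) : v.set x d x = d :=
  if_pos rfl

@[simp]
theorem Val.set_apply_of_ne (v : Val α) {x y : Clock α} (d : Option ℝ) (h : y ≠ x) :
    v.set x d y = v y :=
  if_neg h

omit [DecidableEq α] in
@[simp]
theorem elapse_zero (v : Val α) : elapse v 0 = v := by
  funext c
  cases c <;> simp [elapse]

theorem Nonneg.set {v : Val α} (hv : Nonneg v) (x : Clock α) {d : ℝ} (hd : 0 ≤ d) :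
    Nonneg (v.set x (some d)) := by
  intro y r hr
  by_cases hy : y = x
  · simp only [hy, Val.set_apply_same, Option.some.injEq] at hr
    exact hr ▸ hd
  · exact hv y r (by simpa [hy] using hr)

omit [DecidableEq α] in
theorem canElapse_zero {v : Val α} (hv : Nonneg v) : CanElapse v 0 :=
  ⟨le_rfl, fun _ r hr => hv _ r hr⟩

theorem singleton_mem_untimedLangFrom_iff {Q : Type} (A : ECTA α Q) (q : Q) (v : Val α)
    (σ : α) :
    [σ] ∈ UntimedLangFrom A q v ↔
      ∃ t q' v', TStep A q v t σ q' v' ∧ q' ∈ A.accept ∧ FinalVal v' := by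
  constructor
  · rintro ⟨θ, hacc, hθ⟩
    cases hacc with
    | nil => simp at hθ
    | cons _ _ t σ' q' v' w hstep hrest =>
      obtain ⟨rfl, rfl⟩ : σ' = σ ∧ w = [] := by simpa using hθ
      cases hrest with
      | nil _ _ hq hv => exact ⟨t, q', v', hstep, hq, hv⟩
  · rintro ⟨t, q', v', hstep, hq, hv⟩
    exact ⟨[(t, σ)], .cons _ _ _ _ _ _ _ hstep (.nil _ _ hq hv), rfl⟩

def histVal (a : α) (r : ℝ) : Val α := fun c => if c = .hist a then some r else none

theorem nonneg_histVal (a : α) {r : ℝ} (hr : 0 ≤ r) : Nonneg (histVal a r) := by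
  intro c r' hr'
  by_cases hc : c = .hist a
  · simp only [histVal, hc, ↓reduceIte, Option.some.injEq] at hr'
    exact hr' ▸ hr
  · simp [histVal, hc] at hr'

def eventVal (a : α) (m : ℕ) : Val α := (histVal a m).set (.proph a) (some 0)

def histCheck (a : α) (n : ℕ) : ECTA α Bool where
  init := false
  edges := {(false, a, .eq (.hist a) n, true)}
  accept := {true}

theorem singleton_mem_untimedLangFrom_histCheck_iff (a : α) (m n : ℕ) :
    [a] ∈ UntimedLangFrom (histCheck a n) false (eventVal a m) ↔ m = n := by
  rw [singleton_mem_untimedLangFrom_iff]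
  constructor
  · rintro ⟨t, q', v', ⟨-, ψ, hedge, vb, -, hvb, -, hsat⟩, -, -⟩
    obtain rfl : ψ = .eq (.hist a) n := by
      simp only [histCheck, Set.mem_singleton_iff, Prod.mk.injEq] at hedge
      exact hedge.2.2.1
    have ht : t = 0 := by
      simpa [eventVal, elapse, eq_comm] using congrFun hvb (.proph a)
    have hmn : (m : ℝ) + t = n := by
      simp only [Constr.sat] at hsat
      simpa [eventVal, histVal, elapse, hsat] using (congrFun hvb (.hist a)).symm
    exact_mod_cast ht ▸ hmn
  · rintro rfl
    have hvb : Nonneg (histVal a m) := nonneg_histVal a m.cast_nonneg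
    refine ⟨0, true, (histVal a m).set (.hist a) (some 0),
      ⟨canElapse_zero (hvb.set _ le_rfl), _, rfl, histVal a m, hvb, by simp [eventVal], rfl, ?_⟩,
      rfl, fun b => by simp [histVal]⟩
    simp [Constr.sat, histVal]

end

/-- There is no finite time-abstract language equivalence for event-clock automata:
any equivalence relation on valuations of event clocks over `{a,b}` such that related
valuations have the same untimed language from every location of every ECTA has
infinitely many equivalence classes. -/
theorem no_finite_time_abstract_language_equivalence
    (s : Setoid (Val (Fin 2)))
    (h : ∀ (Q : Type) (A : ECTA (Fin 2) Q) (q : Q) (v₁ v₂ : Val (Fin 2)),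
        s.r v₁ v₂ → UntimedLangFrom A q v₁ = UntimedLangFrom A q v₂) :
    Infinite (Quotient s) := by
  refine Infinite.of_injective (fun m : ℕ => Quotient.mk s (eventVal 0 m)) fun m n hmn => ?_
  have hlang := h Bool (histCheck 0 n) false _ _ (Quotient.exact hmn)
  have hn := (singleton_mem_untimedLangFrom_histCheck_iff (0 : Fin 2) n n).2 rfl
  rwa [← hlang, singleton_mem_untimedLangFrom_histCheck_iff] at hn
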